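/- For real α, β with α+β > -1 and f absolutely continuous on 𝕋 with derivative ḟ(e^{iθ}) = d/dθ f(e^{iθ}) in L¹(𝕋), the angular derivative of u = P_{α,β}[f] satisfies ∂_θ u(re^{iθ}) = P_{α,β}[ḟ](re^{iθ}) for all r ∈ [0,1) and θ. -/

import Mathlib

noncomputable section

open Complex MeasureTheory intervalIntegral Real Filter

/-- Wirtinger derivative ∂_z = (∂_x − i∂_y)/2. -/
def wdz (u : ℂ → ℂ) (z : ℂ) : ℂ :=
  (fderiv ℝ u z 1 - Complex.I * fderiv ℝ u z Complex.I) / 2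

/-- Wirtinger derivative ∂_z̄ = (∂_x + i∂_y)/2. -/
def wdzbar (u : ℂ → ℂ) (z : ℂ) : ℂ :=
  (fderiv ℝ u z 1 + Complex.I * fderiv ℝ u z Complex.I) / 2

/-- The kernel K_{α,β}(z) = (1-|z|²)^{α+β+1} / ((1-z)^{α+1}(1-z̄)^{β+1}). -/
def Kab (a b : ℝ) (z : ℂ) : ℂ :=
  ((1 - ‖z‖ ^ 2 : ℂ) ^ ((a + b + 1 : ℝ) : ℂ)) /
    ((1 - z) ^ ((a + 1 : ℝ) : ℂ) * (1 - (starRingEnd ℂ) z) ^ ((b + 1 : ℝ) : ℂ))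

/-- The constant c_{α,β} = Γ(α+1)Γ(β+1)/Γ(α+β+1). -/
def cab (a b : ℝ) : ℝ := Real.Gamma (a + 1) * Real.Gamma (b + 1) / Real.Gamma (a + b + 1)

/-- The kernel integral K_{a,b}[f](z) = (1/2π)∫₀^{2π} K_{a,b}(z e^{-it}) f(e^{it}) dt. -/
def Kint (a b : ℝ) (f : ℝ → ℂ) (z : ℂ) : ℂ :=
  ((1 / (2 * π) : ℝ) : ℂ) *
    ∫ t in (0:ℝ)..(2 * π), Kab a b (z * Complex.exp (-(t : ℂ) * Complex.I)) * f t

/-- The (α,β)-harmonic Poisson integral P_{α,β}[f] = c_{α,β} K_{α,β}[f]. -/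
def Pab (a b : ℝ) (f : ℝ → ℂ) (z : ℂ) : ℂ := (cab a b : ℂ) * Kint a b f z

/-- I_λ(r) = (1/2π)∫₀^{2π} (1-r²)^λ / |1-re^{-iθ}|^{λ+1} dθ. -/
def Ilam (lam r : ℝ) : ℝ :=
  (1 / (2 * π)) * ∫ θ in (0:ℝ)..(2 * π),
    (1 - r ^ 2) ^ lam / ‖1 - (r : ℂ) * Complex.exp (-(θ : ℂ) * Complex.I)‖ ^ (lam + 1)

/-- Integral mean M_p(r,v). -/
def Mp (p r : ℝ) (v : ℂ → ℂ) : ℝ :=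
  ((1 / (2 * π)) * ∫ θ in (0:ℝ)..(2 * π),
      ‖v ((r : ℂ) * Complex.exp ((θ : ℂ) * Complex.I))‖ ^ p) ^ (1 / p)

/-- L^p norm on the circle (normalized). -/
def nLp (p : ℝ) (f : ℝ → ℂ) : ℝ :=
  ((1 / (2 * π)) * ∫ θ in (0:ℝ)..(2 * π), ‖f θ‖ ^ p) ^ (1 / p)

/-- Membership in the generalized Hardy space H^p_G(𝔻). -/
def MemHG (p : ℝ) (v : ℂ → ℂ) : Prop :=
  ∃ C : ℝ, ∀ r ∈ Set.Ioo (0:ℝ) 1, Mp p r v ≤ C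

/-- x is not a negative integer. -/
def NotNegInt (x : ℝ) : Prop := ∀ n : ℕ, x ≠ -(n + 1 : ℝ)

/-- f (as a 2π-periodic function of θ, representing a function on 𝕋) is absolutely
continuous with angular derivative fdot ∈ L¹. -/
def CircleAC (f fdot : ℝ → ℂ) : Prop :=
  Function.Periodic f (2 * π) ∧ (∀ θ : ℝ, f θ = f 0 + ∫ t in (0:ℝ)..θ, fdot t) ∧
    IntervalIntegrable fdot MeasureTheory.volume 0 (2 * π)

/-- Pochhammer symbol (x)_n. -/
def ascP (x : ℝ) (n : ℕ) : ℝ := Polynomial.eval x (ascPochhammer ℝ n)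

/-- Gaussian hypergeometric function F(a,b;c;x). -/
def hyperF (a b c x : ℝ) : ℝ :=
  ∑' n : ℕ, ascP a n * ascP b n / (ascP c n * (n.factorial : ℝ)) * x ^ n

/-! Differentiating `P_{α,β}[f](re^{iθ})` in `θ` under the integral sign puts the derivative on
the kernel `s ↦ K_{α,β}(re^{-is})`, which is smooth and `2π`-periodic because `|r| < 1`. An
integration by parts against `f = f(0) + ∫₀^t ḟ` then moves it onto `f`: the boundary terms
vanish by periodicity of the kernel and `∫₀^{2π} ḟ = 0`. Since `f` is only absolutely
continuous, that integration by parts is proved by Fubini on the triangle `σ ≤ t`. -/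

theorem ContDiffAt.cpow_const_of_mem_slitPlane {E : Type*} [NormedAddCommGroup E]
    [NormedSpace ℝ E] {g : E → ℂ} {x : E} {n : WithTop ℕ∞} (hg : ContDiffAt ℝ n g x)
    (hx : g x ∈ slitPlane) (c : ℂ) : ContDiffAt ℝ n (fun y => g y ^ c) x :=
  ((analyticAt_id.cpow analyticAt_const hx).contDiffAt.restrict_scalars ℝ).comp x hg

theorem Complex.one_sub_mem_slitPlane {w : ℂ} (hw : ‖w‖ < 1) : 1 - w ∈ slitPlane := by
  refine mem_slitPlane_iff.2 (Or.inl ?_)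
  have := (re_le_norm w).trans_lt hw
  simp only [sub_re, one_re]
  linarith

theorem contDiffAt_Kab (a b : ℝ) {z : ℂ} (hz : ‖z‖ < 1) {n : WithTop ℕ∞} :
    ContDiffAt ℝ n (Kab a b) z := by
  have hz₁ : 1 - z ∈ slitPlane := one_sub_mem_slitPlane hz
  have hz₂ : 1 - starRingEnd ℂ z ∈ slitPlane :=
    one_sub_mem_slitPlane (by simpa using hz)
  have hnum :
      ContDiffAt ℝ n (fun w : ℂ => (1 - (‖w‖ : ℂ) ^ 2) ^ ((a + b + 1 : ℝ) : ℂ)) z := by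
    have hsq : ContDiffAt ℝ n (fun w : ℂ => ((‖w‖ ^ 2 : ℝ) : ℂ)) z :=
      (ofRealCLM.contDiff.comp (contDiff_norm_sq ℝ)).contDiffAt
    refine (contDiffAt_const.sub (by simpa using hsq)).cpow_const_of_mem_slitPlane ?_ _
    rw [← ofReal_pow, ← ofReal_one, ← ofReal_sub, ofReal_mem_slitPlane]
    nlinarith [norm_nonneg z]
  have hden₁ : ContDiffAt ℝ n (fun w : ℂ => (1 - w) ^ ((a + 1 : ℝ) : ℂ)) z :=
    (contDiffAt_const.sub contDiffAt_id).cpow_const_of_mem_slitPlane hz₁ _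
  have hden₂ :
      ContDiffAt ℝ n (fun w : ℂ => (1 - starRingEnd ℂ w) ^ ((b + 1 : ℝ) : ℂ)) z :=
    (contDiffAt_const.sub conjCLE.contDiff.contDiffAt).cpow_const_of_mem_slitPlane hz₂ _
  have hden_ne :
      (1 - z) ^ ((a + 1 : ℝ) : ℂ) * (1 - starRingEnd ℂ z) ^ ((b + 1 : ℝ) : ℂ) ≠ 0 :=
    mul_ne_zero (cpow_ne_zero_iff.2 (Or.inl (slitPlane_ne_zero hz₁)))
      (cpow_ne_zero_iff.2 (Or.inl (slitPlane_ne_zero hz₂)))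
  exact (hnum.mul ((hden₁.mul hden₂).fun_inv hden_ne)).congr_of_eventuallyEq
    (Eventually.of_forall fun w => div_eq_mul_inv _ _)

theorem contDiff_Kab_circle (a b : ℝ) {r : ℝ} (hr : |r| < 1) {n : WithTop ℕ∞} :
    ContDiff ℝ n fun s : ℝ => Kab a b (r * exp (-(s : ℂ) * I)) := by
  have hof : ContDiff ℝ n fun s : ℝ => (s : ℂ) := ofRealCLM.contDiff
  refine contDiff_iff_contDiffAt.2 fun s => (contDiffAt_Kab a b ?_).comp s (by fun_prop)
  rw [norm_mul, ← ofReal_neg, norm_exp_ofReal_mul_I, norm_real, mul_one]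
  simpa using hr

theorem periodic_Kab_circle (a b r : ℝ) :
    Function.Periodic (fun s : ℝ => Kab a b (r * exp (-(s : ℂ) * I))) (2 * π) := by
  intro s
  dsimp only
  rw [show -((s + 2 * π : ℝ) : ℂ) * I = -(s : ℂ) * I - 2 * π * I by push_cast; ring,
    Complex.exp_sub, exp_two_pi_mul_I, div_one]

theorem intervalIntegral.integral_mul_primitive_eq {𝕜 : Type*} [RCLike 𝕜] {u u' g : ℝ → 𝕜}
    {a b : ℝ} (hab : a ≤ b) (hu : ∀ t ∈ Set.Icc a b, HasDerivAt u (u' t) t)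
    (hu' : ContinuousOn u' (Set.Icc a b)) (hg : IntervalIntegrable g volume a b) :
    ∫ t in a..b, u' t * ∫ σ in a..t, g σ =
      u b * (∫ σ in a..b, g σ) - ∫ σ in a..b, u σ * g σ := by
  set ν := volume.restrict (Set.Ioc a b)
  have hgν : Integrable g ν := (intervalIntegrable_iff_integrableOn_Ioc_of_le hab).1 hg
  have hu'ν : Integrable u' ν := (hu'.integrableOn_Icc).mono_set Set.Ioc_subset_Icc_self
  let F : ℝ → ℝ → 𝕜 := fun t σ => (Set.Iic t).indicator (fun σ => u' t * g σ) σ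
  have hF : Integrable (Function.uncurry F) (ν.prod ν) :=
    (hu'ν.mul_prod hgν).indicator (s := {p : ℝ × ℝ | p.2 ≤ p.1})
      (measurableSet_le measurable_snd measurable_fst)
  have h_inner_σ : ∀ t ∈ Set.Ioc a b, ∫ σ, F t σ ∂ν = u' t * ∫ σ in a..t, g σ := by
    intro t ht
    rw [MeasureTheory.integral_indicator measurableSet_Iic,
      Measure.restrict_restrict measurableSet_Iic, Set.Iic_inter_Ioc_of_le ht.2,
      MeasureTheory.integral_const_mul, integral_of_le ht.1.le]
  have h_inner_t : ∀ σ ∈ Set.Ioc a b, ∫ t, F t σ ∂ν = (u b - u σ) * g σ := by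
    intro σ hσ
    have hsub : Set.uIcc σ b ⊆ Set.Icc a b := by
      rw [Set.uIcc_of_le hσ.2]; exact Set.Icc_subset_Icc_left hσ.1.le
    have hFσ : (fun t => F t σ) = (Set.Ici σ).indicator (fun t => u' t * g σ) := rfl
    have hIcc : Set.Ici σ ∩ Set.Ioc a b = Set.Icc σ b := by
      ext t
      simp only [Set.mem_inter_iff, Set.mem_Ici, Set.mem_Ioc, Set.mem_Icc]
      grind [hσ.1]
    rw [hFσ, MeasureTheory.integral_indicator measurableSet_Ici,
      Measure.restrict_restrict measurableSet_Ici, hIcc, integral_Icc_eq_integral_Ioc,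
      ← integral_of_le hσ.2, intervalIntegral.integral_mul_const,
      integral_eq_sub_of_hasDerivAt (fun t ht => hu t (hsub ht))
        (hu'.mono hsub).intervalIntegrable]
  calc ∫ t in a..b, u' t * ∫ σ in a..t, g σ
      = ∫ t, ∫ σ, F t σ ∂ν ∂ν := by
        rw [integral_of_le hab]; exact (setIntegral_congr_fun measurableSet_Ioc h_inner_σ).symm
    _ = ∫ σ, ∫ t, F t σ ∂ν ∂ν := integral_integral_swap hF
    _ = ∫ σ in a..b, (u b - u σ) * g σ := by
        rw [integral_of_le hab]; exact setIntegral_congr_fun measurableSet_Ioc h_inner_t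
    _ = u b * (∫ σ in a..b, g σ) - ∫ σ in a..b, u σ * g σ := by
        simp_rw [sub_mul]
        have hu_cont : ContinuousOn u (Set.uIcc a b) := fun t ht =>
          (hu t (Set.uIcc_of_le hab ▸ ht)).continuousAt.continuousWithinAt
        rw [integral_sub (hg.const_mul _) (hg.continuousOn_mul hu_cont), integral_const_mul]

theorem hasDerivAt_integral_comp_sub_mul {𝕜 : Type*} [RCLike 𝕜] {K g : ℝ → 𝕜} {a b : ℝ}
    (hK : ContDiff ℝ 1 K) (hg : IntervalIntegrable g volume a b) (x₀ : ℝ) :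
    HasDerivAt (fun x => ∫ t in a..b, K (t - x) * g t)
      (-∫ t in a..b, deriv K (t - x₀) * g t) x₀ := by
  have hK' : Continuous (deriv K) := hK.continuous_deriv le_rfl
  obtain ⟨C, hC⟩ := ((isCompact_uIcc.prod (isCompact_closedBall x₀ 1)).image
    continuous_sub).exists_bound_of_continuousOn hK'.continuousOn
  have hg_meas := hg.def'.aestronglyMeasurable
  simp_rw [← intervalIntegral.integral_neg, ← neg_mul]
  refine (intervalIntegral.hasDerivAt_integral_of_dominated_loc_of_deriv_le
    (F' := fun x t => -deriv K (t - x) * g t) (bound := fun t => C * ‖g t‖)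
    (Metric.ball_mem_nhds x₀ one_pos) ?_ ?_ ?_ ?_ (hg.norm.const_mul C) ?_).2
  · exact Eventually.of_forall fun x =>
      (hK.continuous.comp (continuous_sub_right x)).aestronglyMeasurable.mul hg_meas
  · exact hg.continuousOn_mul (hK.continuous.comp (continuous_sub_right x₀)).continuousOn
  · exact (hK'.comp (continuous_sub_right x₀)).neg.aestronglyMeasurable.mul hg_meas
  · refine ae_of_all _ fun t ht x hx => ?_
    rw [norm_mul, norm_neg]
    exact mul_le_mul_of_nonneg_right
      (hC _ (Set.mem_image_of_mem _ (Set.mk_mem_prod (Set.uIoc_subset_uIcc ht)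
        (Metric.ball_subset_closedBall hx)))) (norm_nonneg _)
  · refine ae_of_all _ fun t _ x _ => ?_
    exact ((hK.differentiable one_ne_zero (t - x)).hasDerivAt.comp_const_sub t x).mul_const _

theorem hasDerivAt_integral_comp_sub_mul_of_circleAC {K f fdot : ℝ → ℂ} (hK : ContDiff ℝ 1 K)
    (hKper : Function.Periodic K (2 * π)) (hf : CircleAC f fdot) (x : ℝ) :
    HasDerivAt (fun x => ∫ t in 0..2 * π, K (t - x) * f t)
      (∫ t in 0..2 * π, K (t - x) * fdot t) x := by
  obtain ⟨hf_per, hf_eq, hfdot⟩ := hf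
  have hu : ∀ t, HasDerivAt (fun t => K (t - x)) (deriv K (t - x)) t := fun t =>
    (hK.differentiable one_ne_zero (t - x)).hasDerivAt.comp_sub_const t x
  have hu' : Continuous fun t => deriv K (t - x) :=
    (hK.continuous_deriv le_rfl).comp (continuous_sub_right x)
  have hfdot_zero : ∫ t in 0..2 * π, fdot t = 0 := by
    have hf_2π : f (2 * π) = f 0 := by simpa using hf_per 0
    simpa [hf_2π] using hf_eq (2 * π)
  have hK_zero : K (2 * π - x) - K (0 - x) = 0 := by
    rw [show 2 * π - x = -x + 2 * π by ring, hKper, zero_sub, sub_self]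
  have hF_cont : ContinuousOn (fun θ => ∫ t in 0..θ, fdot t) (Set.uIcc 0 (2 * π)) :=
    continuousOn_primitive_interval' hfdot Set.left_mem_uIcc
  have hf_cont : ContinuousOn f (Set.uIcc 0 (2 * π)) :=
    (continuousOn_const.add hF_cont).congr fun θ _ => hf_eq θ
  have hparts :
      ∫ t in 0..2 * π, deriv K (t - x) * f t = -∫ t in 0..2 * π, K (t - x) * fdot t :=
    calc ∫ t in 0..2 * π, deriv K (t - x) * f t
        = ∫ t in 0..2 * π, (f 0 * deriv K (t - x)
            + deriv K (t - x) * ∫ σ in 0..t, fdot σ) :=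
          integral_congr fun t _ => by rw [hf_eq t]; ring
      _ = f 0 * (K (2 * π - x) - K (0 - x))
            + (K (2 * π - x) * (∫ σ in 0..2 * π, fdot σ)
              - ∫ t in 0..2 * π, K (t - x) * fdot t) := by
          rw [integral_add (hu'.intervalIntegrable _ _ |>.const_mul _)
              (hu'.continuousOn.fun_mul hF_cont).intervalIntegrable,
            intervalIntegral.integral_const_mul,
            integral_eq_sub_of_hasDerivAt (fun t _ => hu t) (hu'.intervalIntegrable _ _),
            integral_mul_primitive_eq two_pi_pos.le (fun t _ => hu t) hu'.continuousOn hfdot]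
      _ = -∫ t in 0..2 * π, K (t - x) * fdot t := by rw [hK_zero, hfdot_zero]; ring
  simpa [hparts] using hasDerivAt_integral_comp_sub_mul hK hf_cont.intervalIntegrable x

theorem Pab_mul_exp (a b r : ℝ) (g : ℝ → ℂ) (x : ℝ) :
    Pab a b g (r * exp (x * I)) = cab a b * ((1 / (2 * π) : ℝ) : ℂ) *
      ∫ t in 0..2 * π, Kab a b (r * exp (-((t - x : ℝ) : ℂ) * I)) * g t := by
  simp_rw [Pab, Kint, mul_assoc, ← Complex.exp_add]
  congr 4
  ext t
  congr 4
  push_cast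
  ring

theorem stmt10_general (a b : ℝ) (f fdot : ℝ → ℂ) (hf : CircleAC f fdot) (r : ℝ) (hr0 : 0 ≤ r)
    (hr1 : r < 1) (θ : ℝ) :
    deriv (fun t : ℝ => Pab a b f ((r : ℂ) * Complex.exp ((t : ℂ) * Complex.I))) θ =
      Pab a b fdot ((r : ℂ) * Complex.exp ((θ : ℂ) * Complex.I)) := by
  have hr : |r| < 1 := abs_lt.2 ⟨by linarith, hr1⟩
  simp_rw [Pab_mul_exp]
  exact ((hasDerivAt_integral_comp_sub_mul_of_circleAC (contDiff_Kab_circle a b hr)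
    (periodic_Kab_circle a b r) hf θ).const_mul _).deriv

theorem stmt10 (a b : ℝ) (hna : NotNegInt a) (hnb : NotNegInt b) (hab : -1 < a + b)
    (f fdot : ℝ → ℂ) (hf : CircleAC f fdot) (r : ℝ) (hr0 : 0 ≤ r) (hr1 : r < 1) (θ : ℝ) :
    deriv (fun t : ℝ => Pab a b f ((r : ℂ) * Complex.exp ((t : ℂ) * Complex.I))) θ =
      Pab a b fdot ((r : ℂ) * Complex.exp ((θ : ℂ) * Complex.I)) :=
  stmt10_general a b f fdot hf r hr0 hr1 θ
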